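/- Theorem 1: for every channel state pattern (i.e., every choice of the indicators 1_{i,k}(t) satisfying the monotonicity and coverage assumptions), the primal objective value Σ_{t=1}^T (Σ_{k=1}^M C_k x_k(t) + (1/N) Σ_{i=1}^N Σ_{j=1}^t z_{i,j}(t)) computed by Alg. 1 at the end of slot T is at most (1 + 1/((1 + 1/C_M)^⌊C_1⌋ − 1)) · OPT(s). -/
import Mathlib


open scoped Classical
open MeasureTheory

noncomputable section

/-- Age of information of user `i` under schedule `d`:
`a_i(0) = 0`, and `a_i(t) = 0` if `1_{i,d(t)}(t) = 1`, `a_i(t) = a_i(t-1) + 1` otherwise. -/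
def age (ind : ℕ → ℕ → ℕ → ℝ) (d : ℕ → ℕ) (i : ℕ) : ℕ → ℕ
  | 0 => 0
  | t + 1 => if ind i (d (t + 1)) (t + 1) = 1 then 0 else age ind d i t + 1

/-- Inner loop of Alg. 1 at a fixed slot: `innerLoop Ck θ ps j` is the value of the current
slot's `x`-variable after processing iterations `1, …, j`, where `ps j` is the (final)
contribution `Σ_{τ=j}^{t-1} x_{k*_τ}(τ)` of the earlier slots.  At iteration `j` the current
value of `Σ_{τ=j}^{t} x_{k*_τ}(τ)` is `ps j + innerLoop Ck θ ps (j-1)`; if it is `< 1`, the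
`x`-variable is increased by `(1/Ck) Σ_{τ=j}^{t} x_{k*_τ}(τ) + 1/(θ·Ck)`. -/
def innerLoop (Ck θ : ℝ) (ps : ℕ → ℝ) : ℕ → ℝ
  | 0 => 0
  | j + 1 =>
      if ps (j + 1) + innerLoop Ck θ ps j < 1 then
        innerLoop Ck θ ps j + (ps (j + 1) + innerLoop Ck θ ps j) / Ck + 1 / (θ * Ck)
      else innerLoop Ck θ ps j

/-- `xvec Ck θ t τ` : the value of `x_{k*_τ}(τ)` after Alg. 1 has processed slots `1, …, t`
(`Ck τ` stands for the cost `C_{k*_τ}` used in slot `τ`). -/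
def xvec (Ck : ℕ → ℝ) (θ : ℝ) : ℕ → ℕ → ℝ
  | 0, _ => 0
  | t + 1, τ =>
      if τ = t + 1 then
        innerLoop (Ck (t + 1)) θ (fun j => ∑ σ ∈ Finset.Ico j (t + 1), xvec Ck θ t σ) (t + 1)
      else xvec Ck θ t τ

/-- Final value of `x_{k*_t}(t)` computed by Alg. 1. -/
def xval (Ck : ℕ → ℝ) (θ : ℝ) (t : ℕ) : ℝ := xvec Ck θ t t

/-- `psFun Ck θ t j = Σ_{σ=j}^{t-1} x_{k*_σ}(σ)` (final values of the slots before `t`). -/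
def psFun (Ck : ℕ → ℝ) (θ : ℝ) (t : ℕ) (j : ℕ) : ℝ :=
  ∑ σ ∈ Finset.Ico j t, xvec Ck θ (t - 1) σ

/-- The update condition of Alg. 1 at iteration `j` of slot `t`: the current value of
`Σ_{τ=j}^{t} x_{k*_τ}(τ)` (earlier slots final, slot `t` after iterations `1,…,j-1`) is `< 1`. -/
def algCond (Ck : ℕ → ℝ) (θ : ℝ) (t j : ℕ) : Prop :=
  psFun Ck θ t j + innerLoop (Ck t) θ (psFun Ck θ t) (j - 1) < 1

/-- Final value of `z_{i,j}(t)` computed by Alg. 1 (it is the same for every user `i`). -/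
def zval (Ck : ℕ → ℝ) (θ : ℝ) (j t : ℕ) : ℝ :=
  if algCond Ck θ t j then
    1 - (psFun Ck θ t j + innerLoop (Ck t) θ (psFun Ck θ t) (j - 1))
  else 0

/-- Final value of `y_{i,j}(t)` computed by Alg. 1 (it is the same for every user `i`). -/
def yval (Ck : ℕ → ℝ) (θ : ℝ) (N : ℕ) (j t : ℕ) : ℝ :=
  if algCond Ck θ t j then 1 / N else 0

/-- `k*_t`: the minimum power level `k ≥ 1` with `1_{i,k}(t) = 1` for every user `i`. -/
def kstar (ind : ℕ → ℕ → ℕ → ℝ) (N : ℕ) (t : ℕ) : ℕ :=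
  sInf {k : ℕ | 1 ≤ k ∧ ∀ i ∈ Finset.Icc 1 N, ind i k t = 1}

/-- `X(t) = Σ_{τ=1}^t min{x_{k*_τ}(τ), 1}`, used by Alg. 2 (so `X(0) = 0`). -/
def bigX (Ck : ℕ → ℝ) (θ : ℝ) (t : ℕ) : ℝ :=
  ∑ τ ∈ Finset.Icc 1 t, min (xval Ck θ τ) 1

/-- Alg. 2 transmits in slot `t` for randomness `u` iff `u + k ∈ [X(t-1), X(t))` for some
integer `k ≥ 0`. -/
def transmits (Ck : ℕ → ℝ) (θ : ℝ) (u : ℝ) (t : ℕ) : Prop :=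
  ∃ k : ℕ, bigX Ck θ (t - 1) ≤ u + k ∧ u + k < bigX Ck θ t

/-- The decision of Alg. 2 in slot `t` for randomness `u`: transmit with power `k*_t`, or idle. -/
def dAlg (ind : ℕ → ℕ → ℕ → ℝ) (N : ℕ) (Ck : ℕ → ℝ) (θ : ℝ) (u : ℝ) (t : ℕ) : ℕ :=
  if transmits Ck θ u t then kstar ind N t else 0

/-- The constant `θ = (1 + 1/C_M)^⌊C_1⌋ − 1` of Alg. 1. -/
def thetaOf (C : ℕ → ℝ) (M : ℕ) : ℝ := (1 + 1 / C M) ^ ⌊C 1⌋ - 1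


-- ### Auxiliary lemmas ###
-- batch 1 lemmas
lemma innerLoop_nonneg {C θ : ℝ} (hC : 0 < C) (hθ : 0 < θ) {ps : ℕ → ℝ}
    (hps : ∀ j, 0 ≤ ps j) : ∀ j, 0 ≤ innerLoop C θ ps j := by
  intro j
  induction j with
  | zero => simp [innerLoop]
  | succ j ih =>
    rw [innerLoop]
    split
    · have h1 : 0 ≤ (ps (j+1) + innerLoop C θ ps j) / C :=
        div_nonneg (add_nonneg (hps _) ih) hC.le
      have h2 : 0 ≤ 1 / (θ * C) := by positivity
      linarith
    · exact ih

lemma innerLoop_mono {C θ : ℝ} (hC : 0 < C) (hθ : 0 < θ) {ps : ℕ → ℝ}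
    (hps : ∀ j, 0 ≤ ps j) (j : ℕ) : innerLoop C θ ps j ≤ innerLoop C θ ps (j + 1) := by
  rw [innerLoop]
  split
  · have h1 : 0 ≤ (ps (j+1) + innerLoop C θ ps j) / C :=
      div_nonneg (add_nonneg (hps _) (innerLoop_nonneg hC hθ hps j)) hC.le
    have h2 : 0 ≤ 1 / (θ * C) := by positivity
    linarith
  · exact le_refl _

lemma xvec_stab (Ck : ℕ → ℝ) (θ : ℝ) : ∀ u σ, σ ≤ u → xvec Ck θ u σ = xval Ck θ σ := by
  intro u
  induction u with
  | zero => intro σ hσ; interval_cases σ; rfl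
  | succ u ih =>
    intro σ hσ
    rcases eq_or_lt_of_le hσ with h | h
    · rw [h]; rfl
    · have : σ ≤ u := Nat.lt_succ_iff.mp h
      rw [show xvec Ck θ (u+1) σ = xvec Ck θ u σ by rw [xvec]; exact if_neg (by omega)]
      exact ih σ this

lemma xvec_nonneg {Ck : ℕ → ℝ} {θ : ℝ} (hC : ∀ t, 0 < Ck t) (hθ : 0 < θ) :
    ∀ t τ, 0 ≤ xvec Ck θ t τ := by
  intro t
  induction t with
  | zero => intro τ; simp [xvec]
  | succ t ih =>
    intro τ
    rw [xvec]
    split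
    · exact innerLoop_nonneg (hC _) hθ (fun j => Finset.sum_nonneg fun σ _ => ih σ) _
    · exact ih τ

lemma xval_nonneg {Ck : ℕ → ℝ} {θ : ℝ} (hC : ∀ t, 0 < Ck t) (hθ : 0 < θ) (t : ℕ) :
    0 ≤ xval Ck θ t := xvec_nonneg hC hθ t t

lemma psFun_eq_sum_xval (Ck : ℕ → ℝ) (θ : ℝ) (t j : ℕ) :
    psFun Ck θ t j = ∑ σ ∈ Finset.Ico j t, xval Ck θ σ := by
  unfold psFun
  exact Finset.sum_congr rfl fun σ hσ => xvec_stab Ck θ (t-1) σ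
    (by have := (Finset.mem_Ico.mp hσ).2; omega)

lemma psFun_nonneg {Ck : ℕ → ℝ} {θ : ℝ} (hC : ∀ t, 0 < Ck t) (hθ : 0 < θ) (t j : ℕ) :
    0 ≤ psFun Ck θ t j := by
  rw [psFun_eq_sum_xval]
  exact Finset.sum_nonneg fun σ _ => xval_nonneg hC hθ σ

lemma xval_succ (Ck : ℕ → ℝ) (θ : ℝ) (t : ℕ) :
    xval Ck θ (t + 1) = innerLoop (Ck (t + 1)) θ (psFun Ck θ (t + 1)) (t + 1) := by
  rw [xval, xvec, if_pos rfl]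
  rfl


-- slot identity and abstract counting lemma
lemma slot_identity {Ck : ℕ → ℝ} {θ : ℝ} (hC : ∀ t, 0 < Ck t) (hθ : 0 < θ) (t : ℕ) :
    ∀ L, Ck t * innerLoop (Ck t) θ (psFun Ck θ t) L + ∑ j ∈ Finset.Icc 1 L, zval Ck θ j t
      = (1 + 1/θ) * ((Finset.Icc 1 L).filter (algCond Ck θ t)).card := by
  intro L
  induction L with
  | zero => simp [innerLoop]
  | succ L ih =>
    have hCne : Ck t ≠ 0 := (hC t).ne'
    have hθne : θ ≠ 0 := hθ.ne'
    rw [Finset.sum_Icc_succ_top (by omega : 1 ≤ L + 1)]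
    have hfil : (Finset.Icc 1 (L+1)).filter (algCond Ck θ t)
        = if algCond Ck θ t (L+1) then insert (L+1) ((Finset.Icc 1 L).filter (algCond Ck θ t))
          else (Finset.Icc 1 L).filter (algCond Ck θ t) := by
      rw [show Finset.Icc 1 (L+1) = insert (L+1) (Finset.Icc 1 L) by
        ext x; simp [Finset.mem_Icc]; omega]
      rw [Finset.filter_insert]
    have hnotmem : (L+1) ∉ (Finset.Icc 1 L).filter (algCond Ck θ t) := by
      simp
    rw [innerLoop]
    have hcond : (psFun Ck θ t (L+1) + innerLoop (Ck t) θ (psFun Ck θ t) L < 1)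
        ↔ algCond Ck θ t (L+1) := by
      unfold algCond
      simp
    by_cases h : algCond Ck θ t (L+1)
    · rw [if_pos (hcond.mpr h), hfil, if_pos h, Finset.card_insert_of_notMem hnotmem]
      rw [zval, if_pos h]
      push_cast
      have e1 : Ck t * ((psFun Ck θ t (L+1) + innerLoop (Ck t) θ (psFun Ck θ t) L) / Ck t)
          = psFun Ck θ t (L+1) + innerLoop (Ck t) θ (psFun Ck θ t) L := mul_div_cancel₀ _ hCne
      have e2 : Ck t * (1 / (θ * Ck t)) = 1/θ := by field_simp
      rw [mul_add, mul_add, e1, e2]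
      have e3 : (1 + 1/θ) * (((Finset.Icc 1 L).filter (algCond Ck θ t)).card + 1)
          = (1 + 1/θ) * ((Finset.Icc 1 L).filter (algCond Ck θ t)).card + (1 + 1/θ) := by ring
      rw [e3, ← ih]
      ring
    · rw [if_neg (fun hh => h (hcond.mp hh)), hfil, if_neg h, zval, if_neg h]
      rw [add_zero]
      exact ih

lemma countA {n : ℕ} {β θ : ℝ} (hβ : 0 < β) (hθ : 0 < θ)
    (hθeq : θ = (1+β)^n - 1) (v : ℕ → ℝ) (P : ℕ → Prop) [DecidablePred P]
    (hstep : ∀ j, 1 ≤ j → (P j → v (j-1) < 1 ∧ (1+β) * v (j-1) + β/θ ≤ v j)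
      ∧ (¬ P j → v (j-1) ≤ v j))
    (m0 : ℕ) (hm0 : m0 ≤ n) (h0 : ((1+β)^m0 - 1)/θ ≤ v 0) :
    ∀ L, ((1+β)^(m0 + ((Finset.Icc 1 L).filter P).card) - 1)/θ ≤ v L
      ∧ m0 + ((Finset.Icc 1 L).filter P).card ≤ n := by
  intro L
  induction L with
  | zero => simpa using ⟨h0, hm0⟩
  | succ L ih =>
    obtain ⟨ihv, ihc⟩ := ih
    have hfil : (Finset.Icc 1 (L+1)).filter P
        = if P (L+1) then insert (L+1) ((Finset.Icc 1 L).filter P)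
          else (Finset.Icc 1 L).filter P := by
      rw [show Finset.Icc 1 (L+1) = insert (L+1) (Finset.Icc 1 L) by
        ext x; simp [Finset.mem_Icc]; omega]
      rw [Finset.filter_insert]
    have hnotmem : (L+1) ∉ (Finset.Icc 1 L).filter P := by simp
    set c := ((Finset.Icc 1 L).filter P).card with hc
    have h1β : (1:ℝ) < 1 + β := by linarith
    by_cases h : P (L+1)
    · rw [hfil, if_pos h, Finset.card_insert_of_notMem hnotmem]
      obtain ⟨hlt, hgrow⟩ := (hstep (L+1) (by omega)).1 h
      have hL : v (L+1-1) = v L := rfl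
      rw [hL] at hlt hgrow
      -- m0 + c < n since φ(m0+c) ≤ v L < 1 = φ(n)
      have hφ : ((1+β)^(m0+c) - 1)/θ < 1 := lt_of_le_of_lt ihv hlt
      have hpow : (1+β)^(m0+c) < (1+β)^n := by
        have : (1+β)^(m0+c) - 1 < θ := by
          have := (div_lt_one hθ).mp hφ; linarith
        rw [hθeq] at this; linarith
      have hmn : m0 + c < n := (pow_lt_pow_iff_right₀ h1β).mp hpow
      constructor
      · have key : ((1+β)^(m0+(c+1)) - 1)/θ ≤ (1+β) * v L + β/θ := by
          have expand : ((1+β)^(m0+(c+1)) - 1)/θ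
              = (1+β) * (((1+β)^(m0+c) - 1)/θ) + β/θ := by
            have : (1+β)^(m0+(c+1)) = (1+β)^(m0+c) * (1+β) := by
              rw [← pow_succ]; ring_nf
            rw [this]; field_simp; ring
          rw [expand]
          have := mul_le_mul_of_nonneg_left ihv (by linarith : (0:ℝ) ≤ 1+β)
          linarith
        exact le_trans key hgrow
      · omega
    · rw [hfil, if_neg h]
      have := (hstep (L+1) (by omega)).2 h
      have hL : v (L+1-1) = v L := rfl
      rw [hL] at this
      exact ⟨le_trans ihv this, ihc⟩

-- Window counting lemma
lemma window_count {Ck : ℕ → ℝ} {θ CM : ℝ} {n : ℕ}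
    (hC1 : ∀ t, 1 ≤ Ck t) (hCM : ∀ t, Ck t ≤ CM) (hCM0 : 0 < CM)
    (hθeq : θ = (1 + 1/CM)^n - 1) (hθ : 0 < θ) (τ : ℕ) (hτ : 1 ≤ τ) :
    ∀ t, τ ≤ t →
      (((1+1/CM)^(∑ t' ∈ Finset.Ico τ t, ((Finset.Icc 1 τ).filter (algCond Ck θ t')).card) - 1)/θ
        ≤ ∑ σ ∈ Finset.Ico τ t, xval Ck θ σ)
      ∧ ∑ t' ∈ Finset.Ico τ t, ((Finset.Icc 1 τ).filter (algCond Ck θ t')).card ≤ n := by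
  have hβ : (0:ℝ) < 1/CM := by positivity
  have hCpos : ∀ t, 0 < Ck t := fun t => lt_of_lt_of_le one_pos (hC1 t)
  intro t ht
  induction t, ht using Nat.le_induction with
  | base => simp
  | succ t ht ih =>
    obtain ⟨ihv, ihc⟩ := ih
    -- set up countA at slot t
    set C := Ck t with hCdef
    set ps := psFun Ck θ t with hpsdef
    have hpsnn : ∀ j, 0 ≤ ps j := fun j => psFun_nonneg hCpos hθ t j
    have hinn : ∀ j, 0 ≤ innerLoop C θ ps j := innerLoop_nonneg (hCpos t) hθ hpsnn
    set Pt := ∑ σ ∈ Finset.Ico τ t, xval Ck θ σ with hPt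
    have hPtnn : 0 ≤ Pt := Finset.sum_nonneg fun σ _ => xval_nonneg hCpos hθ σ
    have hPtle : ∀ j, j ≤ τ → Pt ≤ ps j := by
      intro j hj
      rw [hpsdef, psFun_eq_sum_xval]
      exact Finset.sum_le_sum_of_subset_of_nonneg
        (Finset.Ico_subset_Ico hj le_rfl)
        (fun σ _ _ => xval_nonneg hCpos hθ σ)
    have hstep : ∀ j, 1 ≤ j →
        ((fun j => j ≤ τ ∧ algCond Ck θ t j) j →
          (fun j => Pt + innerLoop C θ ps j) (j-1) < 1 ∧
          (1 + 1/CM) * (fun j => Pt + innerLoop C θ ps j) (j-1) + (1/CM)/θ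
            ≤ (fun j => Pt + innerLoop C θ ps j) j)
        ∧ (¬ (fun j => j ≤ τ ∧ algCond Ck θ t j) j →
          (fun j => Pt + innerLoop C θ ps j) (j-1) ≤ (fun j => Pt + innerLoop C θ ps j) j) := by
      intro j hj
      cases j with
      | zero => omega
      | succ j' =>
        simp only [Nat.add_sub_cancel]
        constructor
        · rintro ⟨hjτ, halg⟩
          have hS : ps (j'+1) + innerLoop C θ ps j' < 1 := by
            have := halg
            unfold algCond at this
            simpa using this
          have hle : Pt ≤ ps (j'+1) := hPtle _ hjτ
          constructor
          · calc Pt + innerLoop C θ ps j' ≤ ps (j'+1) + innerLoop C θ ps j' := by linarith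
              _ < 1 := hS
          · rw [innerLoop, if_pos hS]
            set v := Pt + innerLoop C θ ps j' with hv
            set S := ps (j'+1) + innerLoop C θ ps j' with hSdef
            have hvS : v ≤ S := by rw [hv, hSdef]; linarith
            have hvnn : 0 ≤ v := add_nonneg hPtnn (hinn j')
            have hinv : 1/CM ≤ 1/C := one_div_le_one_div_of_le (hCpos t) (hCM t)
            have h1 : v * (1/CM) ≤ S / C := by
              calc v * (1/CM) ≤ v * (1/C) := mul_le_mul_of_nonneg_left hinv hvnn
                _ ≤ S * (1/C) := mul_le_mul_of_nonneg_right hvS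
                    (one_div_nonneg.mpr (by rw [hCdef]; exact (hCpos t).le))
                _ = S / C := by ring
            have h2 : (1/CM)/θ ≤ 1/(θ * C) := by
              have e : (1/CM)/θ = 1/(θ*CM) := by
                rw [div_div]; ring_nf
              rw [e]
              exact one_div_le_one_div_of_le
                (mul_pos hθ (by rw [hCdef]; exact hCpos t))
                (mul_le_mul_of_nonneg_left (hCM t) hθ.le)
            linarith
        · intro _
          have := innerLoop_mono (hCpos t) hθ hpsnn j'
          linarith
    have hca := countA hβ hθ hθeq (fun j => Pt + innerLoop C θ ps j)
      (fun j => j ≤ τ ∧ algCond Ck θ t j) hstep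
      (∑ t' ∈ Finset.Ico τ t, ((Finset.Icc 1 τ).filter (algCond Ck θ t')).card) ihc
      (by simpa [innerLoop] using ihv) t
    -- translate counts
    have hcnt : ((Finset.Icc 1 t).filter (fun j => j ≤ τ ∧ algCond Ck θ t j)).card
        = ((Finset.Icc 1 τ).filter (algCond Ck θ t)).card := by
      congr 1
      ext x
      simp only [Finset.mem_filter, Finset.mem_Icc]
      constructor
      · rintro ⟨⟨ha, hb⟩, hc, hd⟩; exact ⟨⟨ha, hc⟩, hd⟩
      · rintro ⟨⟨ha, hb⟩, hd⟩; exact ⟨⟨ha, le_trans hb ht⟩, hb, hd⟩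
    have hsum : ∑ t' ∈ Finset.Ico τ (t+1), ((Finset.Icc 1 τ).filter (algCond Ck θ t')).card
        = (∑ t' ∈ Finset.Ico τ t, ((Finset.Icc 1 τ).filter (algCond Ck θ t')).card)
          + ((Finset.Icc 1 τ).filter (algCond Ck θ t)).card :=
      Finset.sum_Ico_succ_top ht _
    have hxsum : ∑ σ ∈ Finset.Ico τ (t+1), xval Ck θ σ = Pt + xval Ck θ t :=
      Finset.sum_Ico_succ_top ht _
    have htpos : 1 ≤ t := le_trans hτ ht
    obtain ⟨t', rfl⟩ : ∃ t', t = t' + 1 := ⟨t - 1, by omega⟩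
    have hxval : xval Ck θ (t'+1) = innerLoop C θ ps (t'+1) := by
      rw [hCdef, hpsdef, xval_succ]
    have hca1 := hca.1
    have hca2 := hca.2
    refine ⟨?_, ?_⟩
    · rw [hsum, hxsum, hxval, ← hcnt]
      exact hca1
    · rw [hsum, ← hcnt]
      exact hca2

lemma age_eq_card (ind : ℕ → ℕ → ℕ → ℝ) (d : ℕ → ℕ) (i : ℕ) :
    ∀ t, (age ind d i t)
      = ((Finset.Icc 1 t).filter (fun j => ∀ σ ∈ Finset.Icc j t, ind i (d σ) σ ≠ 1)).card := by
  intro t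
  induction t with
  | zero => simp [age]
  | succ t ih =>
    rw [age]
    by_cases h : ind i (d (t+1)) (t+1) = 1
    · rw [if_pos h]
      symm
      rw [Finset.card_eq_zero, Finset.filter_eq_empty_iff]
      intro j hj
      simp only [Finset.mem_Icc] at hj
      push_neg
      exact ⟨t+1, Finset.mem_Icc.mpr ⟨hj.2, le_refl _⟩, h⟩
    · rw [if_neg h, ih]
      have hsplit : Finset.Icc 1 (t+1) = insert (t+1) (Finset.Icc 1 t) := by
        ext x; simp [Finset.mem_Icc]; omega
      rw [hsplit, Finset.filter_insert]
      have hP : (∀ σ ∈ Finset.Icc (t+1) (t+1), ind i (d σ) σ ≠ 1) := by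
        intro σ hσ
        simp only [Finset.mem_Icc] at hσ
        have : σ = t + 1 := by omega
        rw [this]; exact h
      rw [if_pos hP, Finset.card_insert_of_notMem (by simp)]
      congr 1
      apply Nat.le_antisymm
      · apply Finset.card_le_card
        intro j hj
        simp only [Finset.mem_filter] at hj ⊢
        refine ⟨hj.1, fun σ hσ => ?_⟩
        rw [Finset.mem_Icc] at hσ
        rcases Nat.lt_or_ge σ (t+1) with hlt | hge
        · exact hj.2 σ (Finset.mem_Icc.mpr ⟨hσ.1, by omega⟩)
        · have hσe : σ = t + 1 := by
            have hjt : j ≤ t + 1 := hσ.1.trans hσ.2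
            omega
          rw [hσe]; exact h
      · apply Finset.card_le_card
        intro j hj
        simp only [Finset.mem_filter] at hj ⊢
        refine ⟨hj.1, fun σ hσ => ?_⟩
        rw [Finset.mem_Icc] at hσ
        exact hj.2 σ (Finset.mem_Icc.mpr ⟨hσ.1, by omega⟩)

lemma per_user_bound {Ck : ℕ → ℝ} {θ CM : ℝ} {n : ℕ}
    (hC1 : ∀ t, 1 ≤ Ck t) (hCM : ∀ t, Ck t ≤ CM) (hCM0 : 0 < CM)
    (hθeq : θ = (1 + 1/CM)^n - 1) (hθ : 0 < θ)
    (T : ℕ) (g : ℕ → Prop) (cost : ℕ → ℝ)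
    (hcost0 : ∀ σ, 0 ≤ cost σ)
    (hcostg : ∀ σ, g σ → (n:ℝ) ≤ cost σ)
    (a : ℕ → ℕ)
    (ha : ∀ t, ((Finset.Icc 1 t).filter (fun j => ∀ σ ∈ Finset.Icc j t, ¬ g σ)).card ≤ a t) :
    (∑ t ∈ Finset.Icc 1 T, (((Finset.Icc 1 t).filter (algCond Ck θ t)).card : ℝ))
      ≤ ∑ σ ∈ Finset.Icc 1 T, cost σ + ∑ t ∈ Finset.Icc 1 T, (a t : ℝ) := by
  -- split each slot's count
  have hsplit : ∀ t, ((Finset.Icc 1 t).filter (algCond Ck θ t)).card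
      ≤ ((Finset.Icc 1 t).filter (fun j => algCond Ck θ t j ∧ ∀ σ ∈ Finset.Icc j t, ¬ g σ)).card
        + ((Finset.Icc 1 t).filter (fun j => algCond Ck θ t j ∧ ∃ σ ∈ Finset.Icc j t, g σ)).card := by
    intro t
    refine le_trans (Finset.card_le_card ?_) (Finset.card_union_le _ _)
    intro j hj
    simp only [Finset.mem_filter, Finset.mem_union] at hj ⊢
    by_cases hg : ∃ σ ∈ Finset.Icc j t, g σ
    · exact Or.inr ⟨hj.1, hj.2, hg⟩
    · push_neg at hg
      exact Or.inl ⟨hj.1, hj.2, hg⟩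
  have hA : ∀ t, (((Finset.Icc 1 t).filter
        (fun j => algCond Ck θ t j ∧ ∀ σ ∈ Finset.Icc j t, ¬ g σ)).card) ≤ a t := by
    intro t
    refine le_trans (Finset.card_le_card ?_) (ha t)
    intro j hj
    simp only [Finset.mem_filter] at hj ⊢
    exact ⟨hj.1, hj.2.2⟩
  -- the B-part via fibers
  set B : ℕ → Finset ℕ := fun t =>
    (Finset.Icc 1 t).filter (fun j => algCond Ck θ t j ∧ ∃ σ ∈ Finset.Icc j t, g σ) with hB
  have hBsum : (∑ t ∈ Finset.Icc 1 T, ((B t).card : ℝ)) ≤ ∑ σ ∈ Finset.Icc 1 T, cost σ := by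
    set Sg := (Finset.Icc 1 T).sigma (fun t => B t) with hSg
    have hcards : ∑ t ∈ Finset.Icc 1 T, (B t).card = Sg.card := (Finset.card_sigma _ _).symm
    set f : (Σ _ : ℕ, ℕ) → ℕ := fun p => Nat.findGreatest (fun σ => p.2 ≤ σ ∧ g σ) p.1 with hf
    have hmem : ∀ p ∈ Sg, (p.2 ≤ f p ∧ g (f p)) ∧ f p ≤ p.1 ∧ 1 ≤ p.2 ∧ p.2 ≤ p.1
        ∧ p.1 ≤ T ∧ algCond Ck θ p.1 p.2 := by
      intro p hp
      rw [hSg, Finset.mem_sigma] at hp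
      obtain ⟨hp1, hp2⟩ := hp
      rw [hB, Finset.mem_filter, Finset.mem_Icc] at hp2
      obtain ⟨⟨hj1, hjt⟩, halg, σ₀, hσ₀, hgσ₀⟩ := hp2
      rw [Finset.mem_Icc] at hσ₀
      have hspec : p.2 ≤ f p ∧ g (f p) :=
        Nat.findGreatest_spec (P := fun σ => p.2 ≤ σ ∧ g σ) (m := σ₀) hσ₀.2 ⟨hσ₀.1, hgσ₀⟩
      rw [Finset.mem_Icc] at hp1
      exact ⟨hspec, Nat.findGreatest_le _, hj1, hjt, hp1.2, halg⟩
    have hmap : ∀ p ∈ Sg, f p ∈ Finset.Icc 1 T := by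
      intro p hp
      obtain ⟨⟨h1, _⟩, h2, h3, _, h5, _⟩ := hmem p hp
      rw [Finset.mem_Icc]
      exact ⟨le_trans h3 h1, le_trans h2 h5⟩
    have hfib := Finset.card_eq_sum_card_fiberwise hmap
    calc (∑ t ∈ Finset.Icc 1 T, ((B t).card : ℝ))
        = ((∑ t ∈ Finset.Icc 1 T, (B t).card : ℕ) : ℝ) := by push_cast; rfl
      _ = ((∑ τ ∈ Finset.Icc 1 T, (Sg.filter (fun p => f p = τ)).card : ℕ) : ℝ) := by
          rw [hcards, hfib]
      _ = ∑ τ ∈ Finset.Icc 1 T, ((Sg.filter (fun p => f p = τ)).card : ℝ) := by push_cast; rfl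
      _ ≤ ∑ σ ∈ Finset.Icc 1 T, cost σ := ?_
    apply Finset.sum_le_sum
    intro τ hτ
    by_cases hne : (Sg.filter (fun p => f p = τ)).Nonempty
    · obtain ⟨p, hp⟩ := hne
      rw [Finset.mem_filter] at hp
      obtain ⟨hpS, hpf⟩ := hp
      obtain ⟨⟨hple, hg⟩, _, hp21, _, _, _⟩ := hmem p hpS
      rw [hpf] at hg hple
      have hτ1 : 1 ≤ τ := le_trans hp21 hple
      -- fiber ⊆ Wset
      have hWC := window_count hC1 hCM hCM0 hθeq hθ τ hτ1 (T+1) (by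
        rw [Finset.mem_Icc] at hτ; omega)
      have hWn : ∑ t' ∈ Finset.Ico τ (T+1), ((Finset.Icc 1 τ).filter (algCond Ck θ t')).card
          ≤ n := hWC.2
      have hsub : Sg.filter (fun p => f p = τ)
          ⊆ (Finset.Ico τ (T+1)).sigma (fun t => (Finset.Icc 1 τ).filter (algCond Ck θ t)) := by
        intro q hq
        rw [Finset.mem_filter] at hq
        obtain ⟨hqS, hqf⟩ := hq
        obtain ⟨⟨hqle, _⟩, hq2, hq3, _, hq5, hq6⟩ := hmem q hqS
        rw [hqf] at hqle hq2
        rw [Finset.mem_sigma, Finset.mem_Ico, Finset.mem_filter, Finset.mem_Icc]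
        exact ⟨⟨hq2, by omega⟩, ⟨hq3, hqle⟩, hq6⟩
      have hcard : (Sg.filter (fun p => f p = τ)).card ≤ n := by
        refine le_trans (Finset.card_le_card hsub) ?_
        rw [Finset.card_sigma]
        exact hWn
      calc ((Sg.filter (fun p => f p = τ)).card : ℝ) ≤ (n : ℝ) := by exact_mod_cast hcard
        _ ≤ cost τ := hcostg τ hg
    · rw [Finset.not_nonempty_iff_eq_empty] at hne
      rw [hne]
      simpa using hcost0 τ
  calc (∑ t ∈ Finset.Icc 1 T, (((Finset.Icc 1 t).filter (algCond Ck θ t)).card : ℝ))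
      ≤ ∑ t ∈ Finset.Icc 1 T,
          ((((Finset.Icc 1 t).filter (fun j => algCond Ck θ t j ∧ ∀ σ ∈ Finset.Icc j t, ¬ g σ)).card : ℝ)
            + ((B t).card : ℝ)) := by
        apply Finset.sum_le_sum
        intro t _
        exact_mod_cast hsplit t
    _ = (∑ t ∈ Finset.Icc 1 T,
          (((Finset.Icc 1 t).filter (fun j => algCond Ck θ t j ∧ ∀ σ ∈ Finset.Icc j t, ¬ g σ)).card : ℝ))
          + ∑ t ∈ Finset.Icc 1 T, ((B t).card : ℝ) := Finset.sum_add_distrib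
    _ ≤ (∑ t ∈ Finset.Icc 1 T, (a t : ℝ)) + ∑ σ ∈ Finset.Icc 1 T, cost σ := by
        apply add_le_add
        · apply Finset.sum_le_sum
          intro t _
          exact_mod_cast hA t
        · exact hBsum
    _ = _ := by ring

lemma age_eq_card2 (ind : ℕ → ℕ → ℕ → ℝ) (d : ℕ → ℕ) (i : ℕ) :
    ∀ t, (age ind d i t)
      = ((Finset.Icc 1 t).filter (fun j => ∀ σ ∈ Finset.Icc j t, ¬ ind i (d σ) σ = 1)).card :=
  age_eq_card ind d i

theorem stmt9' (N M T : ℕ) (hN : 1 ≤ N) (hM : 1 ≤ M) (hT : 1 ≤ T)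
    (ind : ℕ → ℕ → ℕ → ℝ)
    (hind01 : ∀ i k t, ind i k t = 0 ∨ ind i k t = 1)
    (hmono : ∀ i k k' t, k ≤ k' → ind i k t = 1 → ind i k' t = 1)
    (hcov : ∀ i t, ind i M t = 1)
    (hzero : ∀ i t, ind i 0 t = 0)
    (C : ℕ → ℝ) (hC0 : C 0 = 0) (hC1 : 1 ≤ C 1)
    (hCmono : ∀ k k', 1 ≤ k → k ≤ k' → k' ≤ M → C k ≤ C k')
    (kstar : ℕ → ℕ)
    (hk1 : ∀ t, 1 ≤ kstar t) (hkM : ∀ t, kstar t ≤ M)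
    (θ : ℝ) (hθdef : θ = (1 + 1 / C M) ^ ⌊C 1⌋ - 1) :
    ∑ t ∈ Finset.Icc 1 T,
        (∑ k ∈ Finset.Icc 1 M,
            C k * (if k = kstar t then
                xval (fun τ => C (kstar τ)) θ t else 0)
          + (1 / N) * ∑ i ∈ Finset.Icc 1 N, ∑ j ∈ Finset.Icc 1 t,
              zval (fun τ => C (kstar τ)) θ j t)
      ≤ (1 + 1 / θ)
          * sInf {c : ℝ | ∃ d : ℕ → ℕ, (∀ t, d t ≤ M) ∧
              c = ∑ t ∈ Finset.Icc 1 T,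
                    (C (d t) + (1 / N) * ∑ i ∈ Finset.Icc 1 N, (age ind d i t : ℝ))} := by
  set Ck : ℕ → ℝ := fun τ => C (kstar τ) with hCk
  -- basic constants
  have hCM1 : 1 ≤ C M := le_trans hC1 (hCmono 1 M le_rfl hM le_rfl)
  have hCM0 : (0:ℝ) < C M := lt_of_lt_of_le one_pos hCM1
  have hCk1 : ∀ t, 1 ≤ Ck t := fun t => le_trans hC1 (hCmono 1 _ le_rfl (hk1 t) (hkM t))
  have hCkpos : ∀ t, 0 < Ck t := fun t => lt_of_lt_of_le one_pos (hCk1 t)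
  have hCkM : ∀ t, Ck t ≤ C M := fun t => hCmono _ M (hk1 t) (hkM t) le_rfl
  set n : ℕ := ⌊C 1⌋.toNat with hn
  have hfl1 : (1:ℤ) ≤ ⌊C 1⌋ := by
    rw [Int.le_floor]; exact_mod_cast hC1
  have hn1 : 1 ≤ n := by omega
  have hfln : ⌊C 1⌋ = (n:ℤ) := by omega
  have hncast : ((n:ℕ):ℝ) ≤ C 1 := by
    calc ((n:ℕ):ℝ) = ((⌊C 1⌋ : ℤ) : ℝ) := by rw [hfln]; push_cast; ring
      _ ≤ C 1 := Int.floor_le _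
  have hθeq : θ = (1 + 1/(C M))^n - 1 := by
    rw [hθdef, hfln, zpow_natCast]
  have hβpos : (0:ℝ) < 1 / C M := by positivity
  have hθpos : 0 < θ := by
    rw [hθeq]
    have : (1:ℝ) < (1 + 1/(C M))^n :=
      one_lt_pow₀ (by linarith) (by omega)
    linarith
  have hθfacpos : (0:ℝ) ≤ 1 + 1/θ := by positivity
  -- the per-slot simplification
  have hNne : (N:ℝ) ≠ 0 := by positivity
  have hslot : ∀ t ∈ Finset.Icc 1 T,
      (∑ k ∈ Finset.Icc 1 M, C k * (if k = kstar t then xval Ck θ t else 0)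
        + (1 / N) * ∑ i ∈ Finset.Icc 1 N, ∑ j ∈ Finset.Icc 1 t, zval Ck θ j t)
      = (1 + 1/θ) * (((Finset.Icc 1 t).filter (algCond Ck θ t)).card : ℝ) := by
    intro t ht
    rw [Finset.mem_Icc] at ht
    have h1 : ∑ k ∈ Finset.Icc 1 M, C k * (if k = kstar t then xval Ck θ t else 0)
        = Ck t * xval Ck θ t := by
      rw [show (∑ k ∈ Finset.Icc 1 M, C k * (if k = kstar t then xval Ck θ t else 0))
          = ∑ k ∈ Finset.Icc 1 M, (if k = kstar t then C k * xval Ck θ t else 0) from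
        Finset.sum_congr rfl fun k _ => by split <;> ring]
      rw [Finset.sum_ite_eq' (Finset.Icc 1 M) (kstar t) (fun k => C k * xval Ck θ t)]
      rw [if_pos (Finset.mem_Icc.mpr ⟨hk1 t, hkM t⟩)]
    have h2 : (1 / (N:ℝ)) * ∑ i ∈ Finset.Icc 1 N, ∑ j ∈ Finset.Icc 1 t, zval Ck θ j t
        = ∑ j ∈ Finset.Icc 1 t, zval Ck θ j t := by
      rw [Finset.sum_const, Nat.card_Icc]
      simp only [Nat.add_sub_cancel]
      rw [nsmul_eq_mul]
      field_simp
    rw [h1, h2]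
    obtain ⟨t', rfl⟩ : ∃ t', t = t' + 1 := ⟨t - 1, by omega⟩
    rw [show xval Ck θ (t'+1) = innerLoop (Ck (t'+1)) θ (psFun Ck θ (t'+1)) (t'+1) from
      xval_succ Ck θ t']
    exact slot_identity hCkpos hθpos (t'+1) (t'+1)
  rw [Finset.sum_congr rfl hslot, ← Finset.mul_sum]
  -- it remains to bound the dual value by sInf
  set D : ℝ := ∑ t ∈ Finset.Icc 1 T, (((Finset.Icc 1 t).filter (algCond Ck θ t)).card : ℝ)
    with hD
  apply mul_le_mul_of_nonneg_left _ hθfacpos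
  apply le_csInf
  · exact ⟨∑ t ∈ Finset.Icc 1 T,
      (C ((fun _ => M) t) + (1 / N) * ∑ i ∈ Finset.Icc 1 N, (age ind (fun _ => M) i t : ℝ)),
      fun _ => M, fun _ => le_rfl, rfl⟩
  rintro c ⟨d, hd, rfl⟩
  -- per user bound
  have hcost0 : ∀ σ, 0 ≤ C (d σ) := by
    intro σ
    rcases Nat.eq_zero_or_pos (d σ) with h | h
    · rw [h, hC0]
    · exact le_trans (by linarith) (hCmono 1 (d σ) le_rfl h (hd σ))
  have huser : ∀ i, D ≤ ∑ σ ∈ Finset.Icc 1 T, C (d σ)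
      + ∑ t ∈ Finset.Icc 1 T, (age ind d i t : ℝ) := by
    intro i
    apply per_user_bound hCk1 hCkM hCM0 hθeq hθpos T
      (fun σ => ind i (d σ) σ = 1) (fun σ => C (d σ)) hcost0
    · intro σ hg
      have hdσ : 1 ≤ d σ := by
        rcases Nat.eq_zero_or_pos (d σ) with h | h
        · rw [h, hzero i σ] at hg; norm_num at hg
        · exact h
      exact le_trans hncast (hCmono 1 (d σ) le_rfl hdσ (hd σ))
    · intro t
      rw [age_eq_card2 ind d i t]
      apply Finset.card_le_card
      intro j hj
      simp only [Finset.mem_filter] at hj ⊢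
      exact ⟨hj.1, hj.2⟩
  -- average over users
  have hNpos : (0:ℝ) < N := by positivity
  calc D = (1/(N:ℝ)) * ∑ _i ∈ Finset.Icc 1 N, D := by
        rw [Finset.sum_const, Nat.card_Icc]
        simp only [Nat.add_sub_cancel]
        rw [nsmul_eq_mul]
        field_simp
    _ ≤ (1/(N:ℝ)) * ∑ i ∈ Finset.Icc 1 N,
          (∑ σ ∈ Finset.Icc 1 T, C (d σ) + ∑ t ∈ Finset.Icc 1 T, (age ind d i t : ℝ)) := by
        apply mul_le_mul_of_nonneg_left _ (by positivity)
        exact Finset.sum_le_sum fun i _ => huser i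
    _ = ∑ σ ∈ Finset.Icc 1 T, C (d σ)
          + (1/(N:ℝ)) * ∑ i ∈ Finset.Icc 1 N, ∑ t ∈ Finset.Icc 1 T, (age ind d i t : ℝ) := by
        rw [Finset.sum_add_distrib, Finset.sum_const, Nat.card_Icc]
        simp only [Nat.add_sub_cancel]
        rw [nsmul_eq_mul, mul_add]
        congr 1
        field_simp
    _ = ∑ t ∈ Finset.Icc 1 T,
          (C (d t) + (1 / N) * ∑ i ∈ Finset.Icc 1 N, (age ind d i t : ℝ)) := by
        rw [Finset.sum_add_distrib]
        congr 1
        rw [← Finset.mul_sum, Finset.sum_comm]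

/-- Theorem 1: for every channel state pattern, the primal objective value
computed by Alg. 1 at the end of slot `T` is at most
`(1 + 1/((1 + cM⁻¹)^⌊C₁⌋ − 1)) · OPT(s)`. -/
theorem stmt9 (N M T : ℕ) (hN : 1 ≤ N) (hM : 1 ≤ M) (hT : 1 ≤ T)
    (ind : ℕ → ℕ → ℕ → ℝ)
    (hind01 : ∀ i k t, ind i k t = 0 ∨ ind i k t = 1)
    (hmono : ∀ i k k' t, k ≤ k' → ind i k t = 1 → ind i k' t = 1)
    (hcov : ∀ i t, ind i M t = 1)
    (hzero : ∀ i t, ind i 0 t = 0)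
    (C : ℕ → ℝ) (hC0 : C 0 = 0) (hC1 : 1 ≤ C 1)
    (hCmono : ∀ k k', 1 ≤ k → k ≤ k' → k' ≤ M → C k ≤ C k') :
    ∑ t ∈ Finset.Icc 1 T,
        (∑ k ∈ Finset.Icc 1 M,
            C k * (if k = kstar ind N t then
                xval (fun τ => C (kstar ind N τ)) (thetaOf C M) t else 0)
          + (1 / N) * ∑ i ∈ Finset.Icc 1 N, ∑ j ∈ Finset.Icc 1 t,
              zval (fun τ => C (kstar ind N τ)) (thetaOf C M) j t)
      ≤ (1 + 1 / ((1 + 1 / C M) ^ ⌊C 1⌋ - 1))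
          * sInf {c : ℝ | ∃ d : ℕ → ℕ, (∀ t, d t ≤ M) ∧
              c = ∑ t ∈ Finset.Icc 1 T,
                    (C (d t) + (1 / N) * ∑ i ∈ Finset.Icc 1 N, (age ind d i t : ℝ))} := by
  have hk1 : ∀ t, 1 ≤ kstar ind N t :=
    fun t => (Nat.sInf_mem (⟨M, hM, fun i _ => hcov i t⟩ :
      Set.Nonempty {k : ℕ | 1 ≤ k ∧ ∀ i ∈ Finset.Icc 1 N, ind i k t = 1})).1
  have hkM : ∀ t, kstar ind N t ≤ M :=
    fun t => Nat.sInf_le ⟨hM, fun i _ => hcov i t⟩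
  exact stmt9' N M T hN hM hT ind hind01 hmono hcov hzero C hC0 hC1 hCmono
    (kstar ind N) hk1 hkM (thetaOf C M) rfl

end
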